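/- Let d ≥ 1, k ≥ 1, and let t₁, …, t_{2k+2} ∈ ℤ^d be an O_k-configuration. Then for each index i there exists a unique index i′ ≠ i such that ‖t_i − t_{i′}‖_∞ ≥ 2, and for this i′ one in fact has ‖t_i − t_{i′}‖_∞ = 2 (while ‖t_i − t_j‖_∞ = 1 for every j ∉ {i, i′}). -/

import Mathlib

/-- The `ℓ∞` distance between two points of `ℤ^d`, as a natural number. -/
def linfDist {d : ℕ} (x y : Fin d → ℤ) : ℕ :=
  Finset.univ.sup fun i => (x i - y i).natAbs

/-- A family of `2k+2` distinct points of `ℤ^d` is an `O_k`-configuration if, in the graph on the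
indices with an edge exactly when the `ℓ∞` distance is `1`, every index is adjacent to all others
except exactly one. -/
def IsOkConfig (d k : ℕ) (t : Fin (2 * k + 2) → Fin d → ℤ) : Prop :=
  Function.Injective t ∧
    ∀ i : Fin (2 * k + 2), ∃! i' : Fin (2 * k + 2), i' ≠ i ∧ linfDist (t i) (t i') ≠ 1

/-
If `i'` is the unique index with `‖t i - t i'‖ ≠ 1`, then by symmetry of the distance
`i` is the unique such index for `i'`. Any third index `j` (one exists since `2k+2 ≥ 3`) is then at
distance `1` from both, so the triangle inequality gives `‖t i - t i'‖ ≤ 2`; injectivity excludes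
`0`, and `1` is excluded by the choice of `i'`.
-/

section linfDist

variable {d : ℕ}

lemma linfDist_comm (x y : Fin d → ℤ) : linfDist x y = linfDist y x := by
  unfold linfDist
  congr 1 with i
  rw [← Int.natAbs_neg, neg_sub]

lemma linfDist_eq_zero_iff {x y : Fin d → ℤ} : linfDist x y = 0 ↔ x = y := by
  rw [linfDist, ← Nat.bot_eq_zero, Finset.sup_eq_bot_iff, funext_iff]
  simp [sub_eq_zero]

lemma linfDist_triangle (x y z : Fin d → ℤ) :
    linfDist x z ≤ linfDist x y + linfDist y z := by
  refine Finset.sup_le fun i _ => ?_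
  calc (x i - z i).natAbs = ((x i - y i) + (y i - z i)).natAbs := by rw [sub_add_sub_cancel]
    _ ≤ (x i - y i).natAbs + (y i - z i).natAbs := Int.natAbs_add_le _ _
    _ ≤ linfDist x y + linfDist y z :=
      add_le_add (Finset.le_sup (f := fun i => (x i - y i).natAbs) (Finset.mem_univ i))
        (Finset.le_sup (f := fun i => (y i - z i).natAbs) (Finset.mem_univ i))

end linfDist

namespace IsOkConfig

variable {d k : ℕ} {t : Fin (2 * k + 2) → Fin d → ℤ}

lemma eq_of_linfDist_ne_one (ht : IsOkConfig d k t) {i i' j : Fin (2 * k + 2)}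
    (hi' : i' ≠ i ∧ linfDist (t i) (t i') ≠ 1) (hj : j ≠ i ∧ linfDist (t i) (t j) ≠ 1) :
    j = i' :=
  (ht.2 i).unique hj hi'

lemma linfDist_eq_one (ht : IsOkConfig d k t) {i i' j : Fin (2 * k + 2)}
    (hi' : i' ≠ i ∧ linfDist (t i) (t i') ≠ 1) (hji : j ≠ i) (hji' : j ≠ i') :
    linfDist (t i) (t j) = 1 :=
  not_not.1 fun hj => hji' (ht.eq_of_linfDist_ne_one hi' ⟨hji, hj⟩)

lemma linfDist_eq_two (ht : IsOkConfig d k t) (hk : 1 ≤ k) {i i' : Fin (2 * k + 2)}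
    (hi' : i' ≠ i ∧ linfDist (t i) (t i') ≠ 1) : linfDist (t i) (t i') = 2 := by
  have hi : i ≠ i' ∧ linfDist (t i') (t i) ≠ 1 := ⟨hi'.1.symm, linfDist_comm (t i) _ ▸ hi'.2⟩
  obtain ⟨j, hj_ne_i, hj_ne_i'⟩ := Fin.exists_ne_and_ne_of_two_lt i i' (by omega)
  have hij : linfDist (t i) (t j) = 1 := ht.linfDist_eq_one hi' hj_ne_i hj_ne_i'
  have hji' : linfDist (t j) (t i') = 1 := by
    rw [linfDist_comm]
    exact ht.linfDist_eq_one hi hj_ne_i' hj_ne_i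
  have hne_zero : linfDist (t i) (t i') ≠ 0 :=
    fun h => hi'.1 (ht.1 (linfDist_eq_zero_iff.1 h)).symm
  have := linfDist_triangle (t i) (t j) (t i')
  omega

end IsOkConfig

theorem okConfig_unique_far_partner_general (d k : ℕ) (hk : 1 ≤ k)
    (t : Fin (2 * k + 2) → Fin d → ℤ) (ht : IsOkConfig d k t) :
    ∀ i : Fin (2 * k + 2), ∃ i' : Fin (2 * k + 2), i' ≠ i ∧
      linfDist (t i) (t i') = 2 ∧
      (∀ j : Fin (2 * k + 2), j ≠ i → 2 ≤ linfDist (t i) (t j) → j = i') ∧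
      (∀ j : Fin (2 * k + 2), j ≠ i → j ≠ i' → linfDist (t i) (t j) = 1) := by
  intro i
  obtain ⟨i', hi', -⟩ := ht.2 i
  refine ⟨i', hi'.1, ht.linfDist_eq_two hk hi', fun j hji hj => ?_,
    fun j => ht.linfDist_eq_one hi'⟩
  exact ht.eq_of_linfDist_ne_one hi' ⟨hji, by omega⟩

/-- In an `O_k`-configuration (`d ≥ 1`, `k ≥ 1`), for each index `i` there is a
unique index `i' ≠ i` with `ℓ∞` distance at least `2` from `i`; for this `i'` the distance is in
fact exactly `2`, and all other indices are at `ℓ∞` distance exactly `1` from `i`. -/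
theorem okConfig_unique_far_partner (d k : ℕ) (hd : 1 ≤ d) (hk : 1 ≤ k)
    (t : Fin (2 * k + 2) → Fin d → ℤ) (ht : IsOkConfig d k t) :
    ∀ i : Fin (2 * k + 2), ∃ i' : Fin (2 * k + 2), i' ≠ i ∧
      linfDist (t i) (t i') = 2 ∧
      (∀ j : Fin (2 * k + 2), j ≠ i → 2 ≤ linfDist (t i) (t j) → j = i') ∧
      (∀ j : Fin (2 * k + 2), j ≠ i → j ≠ i' → linfDist (t i) (t j) = 1) :=
  okConfig_unique_far_partner_general d k hk t ht
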